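/- arXiv:1202.0729 — 4 statements merged into one kernel-verified Lean document; each statement's English description precedes it below -/
import Mathlib

section
/- For real x > 1 and complex z with Re z = 1/2, the remainder r_z(x) = ∫_x^∞ (-z t^{z-2}/((1-z) log² t)) dt satisfies |r_z(x)| ≤ (1/(|1-z| √x log² x))(1 + 4/log x). -/
/-!
The integrand is `z / (z - 1) * t ^ (z - 2) / log² t`, and `‖z / (z - 1)‖ = 1` because `Re z = 1/2`.
Integrating by parts against `t ^ (z - 1) / ((z - 1) log² t)` leaves the boundary term
`x ^ (z - 1) / ((z - 1) log² x)`, of norm `1 / (‖1 - z‖ √x log² x)`, plus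
`2 / (z - 1) * ∫ t ^ (z - 2) / log³ t`; bounding `log t ≥ log x` there and using
`∫_x^∞ t ^ (-3/2) dt = 2 / √x` gives the second term `4 / log x`.
-/

open MeasureTheory Set Filter Topology Real

section LogPowerIntegral

variable {s : ℂ} {x t : ℝ}

lemma norm_cpow_div_log_pow_le (s : ℂ) (k : ℕ) (hx : 1 < x) (hxt : x ≤ t) :
    ‖(t : ℂ) ^ s / (log t : ℂ) ^ k‖ ≤ t ^ s.re / log x ^ k := by
  have hlogx : 0 < log x := log_pos hx
  rw [norm_div, norm_pow, Complex.norm_real,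
    norm_of_nonneg (hlogx.le.trans (log_le_log (by linarith) hxt)),
    Complex.norm_cpow_eq_rpow_re_of_pos (by linarith)]
  gcongr
  exact rpow_nonneg (by linarith) _

lemma integrableOn_Ioi_cpow_div_log_pow (hs : s.re < -1) (k : ℕ) (hx : 1 < x) :
    IntegrableOn (fun t : ℝ => (t : ℂ) ^ s / (log t : ℂ) ^ k) (Ioi x) := by
  refine ((integrableOn_Ioi_rpow_of_lt hs (by linarith)).div_const (log x ^ k)).mono' ?_ ?_
  · exact Measurable.aestronglyMeasurable (by fun_prop)
  · filter_upwards [ae_restrict_mem measurableSet_Ioi] with t ht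
    exact norm_cpow_div_log_pow_le s k hx ht.le

lemma norm_setIntegral_Ioi_cpow_div_log_pow_le (hs : s.re < -1) (k : ℕ) (hx : 1 < x) :
    ‖∫ t in Ioi x, (t : ℂ) ^ s / (log t : ℂ) ^ k‖ ≤
      -x ^ (s.re + 1) / ((s.re + 1) * log x ^ k) := by
  have hx0 : 0 < x := by linarith
  calc _ ≤ ∫ t in Ioi x, t ^ s.re / log x ^ k :=
        norm_integral_le_of_norm_le ((integrableOn_Ioi_rpow_of_lt hs hx0).div_const _) <|
          (ae_restrict_mem measurableSet_Ioi).mono fun t ht =>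
            norm_cpow_div_log_pow_le s k hx (le_of_lt ht)
    _ = _ := by rw [integral_div, integral_Ioi_rpow_of_lt hs hx0, div_div]

lemma hasDerivAt_cpow_div_log_sq (hs : s ≠ -1) (ht : 0 < t) (ht1 : t ≠ 1) :
    HasDerivAt (fun u : ℝ => (u : ℂ) ^ (s + 1) / (s + 1) / (log u : ℂ) ^ 2)
      ((t : ℂ) ^ s / (log t : ℂ) ^ 2 - 2 / (s + 1) * ((t : ℂ) ^ s / (log t : ℂ) ^ 3)) t := by
  have hlog : (log t : ℂ) ≠ 0 := Complex.ofReal_ne_zero.2 (log_ne_zero_of_pos_of_ne_one ht ht1)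
  have hs1 : s + 1 ≠ 0 := fun h => hs (eq_neg_of_add_eq_zero_left h)
  have ht0 : (t : ℂ) ≠ 0 := Complex.ofReal_ne_zero.2 ht.ne'
  refine ((hasDerivAt_ofReal_cpow_const' ht.ne' hs).div
    (((hasDerivAt_log ht.ne').ofReal_comp).fun_pow 2) (pow_ne_zero 2 hlog)).congr_deriv ?_
  rw [Complex.cpow_add _ _ ht0, Complex.cpow_one]
  push_cast
  field_simp

lemma tendsto_ofReal_cpow_atTop_zero (hs : s.re < 0) :
    Tendsto (fun t : ℝ => (t : ℂ) ^ s) atTop (𝓝 0) := by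
  rw [tendsto_zero_iff_norm_tendsto_zero]
  refine (tendsto_rpow_neg_atTop (neg_pos.2 hs)).congr' ?_
  filter_upwards [eventually_gt_atTop 0] with t ht
  rw [neg_neg, Complex.norm_cpow_eq_rpow_re_of_pos ht]

lemma tendsto_inv_ofReal_log_sq_atTop_zero :
    Tendsto (fun t : ℝ => ((log t : ℂ) ^ 2)⁻¹) atTop (𝓝 0) := by
  have h := ((tendsto_pow_atTop two_ne_zero).comp tendsto_log_atTop).inv_tendsto_atTop
  have h' := (Complex.continuous_ofReal.tendsto 0).comp h
  rw [Complex.ofReal_zero] at h'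
  exact h'.congr fun t => by simp

lemma setIntegral_Ioi_cpow_div_log_sq (hs : s.re < -1) (hx : 1 < x) :
    ∫ t in Ioi x, (t : ℂ) ^ s / (log t : ℂ) ^ 2 =
      -((x : ℂ) ^ (s + 1) / (s + 1) / (log x : ℂ) ^ 2) +
        2 / (s + 1) * ∫ t in Ioi x, (t : ℂ) ^ s / (log t : ℂ) ^ 3 := by
  have hs1 : s ≠ -1 := fun h => by simp [h] at hs
  have hderiv : ∀ t ∈ Ici x,
      HasDerivAt (fun u : ℝ => (u : ℂ) ^ (s + 1) / (s + 1) / (log u : ℂ) ^ 2)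
      ((t : ℂ) ^ s / (log t : ℂ) ^ 2 - 2 / (s + 1) * ((t : ℂ) ^ s / (log t : ℂ) ^ 3)) t :=
    fun t ht => hasDerivAt_cpow_div_log_sq hs1 (by linarith [mem_Ici.1 ht])
      (by linarith [mem_Ici.1 ht])
  have hlim :
      Tendsto (fun u : ℝ => (u : ℂ) ^ (s + 1) / (s + 1) / (log u : ℂ) ^ 2) atTop (𝓝 0) := by
    have h := ((tendsto_ofReal_cpow_atTop_zero (s := s + 1) (by simp; linarith)).div_const
      (s + 1)).mul tendsto_inv_ofReal_log_sq_atTop_zero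
    simpa [div_eq_mul_inv] using h
  have hint2 := integrableOn_Ioi_cpow_div_log_pow hs 2 hx
  have hint3 := (integrableOn_Ioi_cpow_div_log_pow hs 3 hx).const_mul (2 / (s + 1))
  have key := integral_Ioi_of_hasDerivAt_of_tendsto' hderiv (hint2.sub hint3) hlim
  rw [integral_sub hint2 hint3, integral_const_mul] at key
  linear_combination key

end LogPowerIntegral

lemma norm_eq_norm_one_sub_of_re_eq_half {z : ℂ} (hz : z.re = 1 / 2) : ‖z‖ = ‖1 - z‖ := by
  rw [Complex.norm_def, Complex.norm_def, Complex.normSq_apply, Complex.normSq_apply]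
  simp only [Complex.sub_re, Complex.sub_im, Complex.one_re, Complex.one_im, hz]
  ring_nf

theorem r_z_bound (x : ℝ) (hx : 1 < x) (z : ℂ) (hz : z.re = 1 / 2) :
    ‖∫ t in Set.Ioi x, -(z * (t : ℂ) ^ (z - 2)) / ((1 - z) * (((Real.log t) ^ 2 : ℝ) : ℂ))‖ ≤
      1 / (‖1 - z‖ * Real.sqrt x * (Real.log x) ^ 2) * (1 + 4 / Real.log x) := by
  have hx0 : 0 < x := by linarith
  have hlogx : 0 < log x := log_pos hx
  have hre : (z - 2).re = -3 / 2 := by simp [hz]; norm_num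
  have hz1 : z - 1 ≠ 0 := fun h => by simp [sub_eq_zero.1 h] at hz
  have hnorm : ‖z - 1‖ = ‖1 - z‖ := norm_sub_rev _ _
  have hpos : 0 < ‖1 - z‖ := hnorm ▸ norm_pos_iff.2 hz1
  have hintegrand : (fun t : ℝ => -(z * (t : ℂ) ^ (z - 2)) / ((1 - z) * (((log t) ^ 2 : ℝ) : ℂ))) =
      fun t : ℝ => z / (z - 1) * ((t : ℂ) ^ (z - 2) / (log t : ℂ) ^ 2) := by
    funext t
    rw [div_mul_div_comm, ← neg_sub z 1, neg_mul, neg_div_neg_eq]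
    push_cast
    rfl
  have hpow : ‖(x : ℂ) ^ (z - 1)‖ = x ^ (-(1 / 2) : ℝ) := by
    rw [Complex.norm_cpow_eq_rpow_re_of_pos hx0]; simp [hz]; norm_num
  have hB := norm_setIntegral_Ioi_cpow_div_log_pow_le (by linarith) 3 hx
  rw [hintegrand, integral_const_mul, setIntegral_Ioi_cpow_div_log_sq (by linarith) hx,
    show z - 2 + 1 = z - 1 by ring, norm_mul, norm_div, norm_eq_norm_one_sub_of_re_eq_half hz,
    hnorm, div_self hpos.ne', one_mul]
  rw [hre] at hB
  calc _ ≤ ‖(x : ℂ) ^ (z - 1) / (z - 1) / (log x : ℂ) ^ 2‖ +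
        ‖2 / (z - 1)‖ * ‖∫ t in Ioi x, (t : ℂ) ^ (z - 2) / (log t : ℂ) ^ 3‖ := by
        rw [← norm_neg ((x : ℂ) ^ (z - 1) / (z - 1) / (log x : ℂ) ^ 2), ← norm_mul]
        exact norm_add_le _ _
    _ ≤ x ^ (-(1 / 2) : ℝ) / ‖1 - z‖ / log x ^ 2 +
        2 / ‖1 - z‖ * (-x ^ (-3 / 2 + 1 : ℝ) / ((-3 / 2 + 1) * log x ^ 3)) := by
        simp only [norm_div, norm_pow, hpow, hnorm, Complex.norm_real, norm_of_nonneg hlogx.le,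
          Complex.norm_ofNat]
        gcongr
    _ = _ := by
        rw [sqrt_eq_rpow, show (-3 / 2 + 1 : ℝ) = -(1 / 2) by norm_num, rpow_neg hx0.le]
        field_simp
        ring
end

section
/- For real x > 1, the integral F_{1/2}(x) = ∫_x^∞ t^{-3/2}(1/log t + 1/log² t) dt satisfies 2/(√x log x) - 2/(√x log² x) ≤ F_{1/2}(x) ≤ 2/(√x log x) - 2/(√x log² x) + 8/(√x log³ x). -/
open MeasureTheory Set Real Filter

theorem F_half_bounds (x : ℝ) (hx : 1 < x) :
    2 / (Real.sqrt x * Real.log x) - 2 / (Real.sqrt x * (Real.log x) ^ 2) ≤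
        (∫ t in Set.Ioi x, t ^ (-(3 : ℝ) / 2) * (1 / Real.log t + 1 / (Real.log t) ^ 2)) ∧
      (∫ t in Set.Ioi x, t ^ (-(3 : ℝ) / 2) * (1 / Real.log t + 1 / (Real.log t) ^ 2)) ≤
        2 / (Real.sqrt x * Real.log x) - 2 / (Real.sqrt x * (Real.log x) ^ 2) +
          8 / (Real.sqrt x * (Real.log x) ^ 3) := by
  have hx0 : (0:ℝ) < x := lt_trans one_pos hx
  have hlx : 0 < Real.log x := Real.log_pos hx
  set f : ℝ → ℝ := fun t => t ^ (-(3:ℝ)/2) * (1 / Real.log t + 1 / (Real.log t)^2) with hf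
  set r : ℝ → ℝ := fun t => 4 * (t ^ (-(3:ℝ)/2) / (Real.log t)^3) with hr
  set G : ℝ → ℝ := fun t => -2 * t ^ (-(1:ℝ)/2) * (1 / Real.log t - 1 / (Real.log t)^2) with hG
  -- derivative of G on Ici x
  have hderiv : ∀ t ∈ Set.Ici x, HasDerivAt G (f t - r t) t := by
    intro t ht
    have ht1 : 1 < t := lt_of_lt_of_le hx ht
    have ht0 : 0 < t := lt_trans one_pos ht1
    have hlt : 0 < Real.log t := Real.log_pos ht1
    have hltne : Real.log t ≠ 0 := ne_of_gt hlt
    have h1 : HasDerivAt (fun s : ℝ => s ^ (-(1:ℝ)/2)) ((-(1:ℝ)/2) * t ^ ((-(1:ℝ)/2) - 1)) t :=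
      Real.hasDerivAt_rpow_const (Or.inl (ne_of_gt ht0))
    have hlog : HasDerivAt Real.log t⁻¹ t := Real.hasDerivAt_log (ne_of_gt ht0)
    have h2 : HasDerivAt (fun s : ℝ => (Real.log s)⁻¹) (-(t⁻¹) / (Real.log t)^2) t := hlog.inv hltne
    have h3 : HasDerivAt (fun s : ℝ => ((Real.log s)^2)⁻¹)
        (-(2 * Real.log t ^ 1 * t⁻¹) / ((Real.log t)^2)^2) t :=
      (hlog.pow 2).inv (pow_ne_zero _ hltne)
    have h4 : HasDerivAt (fun s : ℝ => -2 * s ^ (-(1:ℝ)/2) * ((Real.log s)⁻¹ - ((Real.log s)^2)⁻¹))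
        ((-2 * ((-(1:ℝ)/2) * t ^ ((-(1:ℝ)/2) - 1))) * ((Real.log t)⁻¹ - ((Real.log t)^2)⁻¹)
          + (-2 * t ^ (-(1:ℝ)/2)) * ((-(t⁻¹) / (Real.log t)^2) - (-(2 * Real.log t ^ 1 * t⁻¹) / ((Real.log t)^2)^2))) t :=
      ((h1.const_mul (-2)).mul (h2.sub h3))
    have hGeq : G = fun s : ℝ => -2 * s ^ (-(1:ℝ)/2) * ((Real.log s)⁻¹ - ((Real.log s)^2)⁻¹) := by
      funext s; simp [hG, one_div]
    rw [hGeq]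
    convert h4 using 1
    have e1 : t ^ ((-(1:ℝ)/2) - 1) = t ^ (-(3:ℝ)/2) := by norm_num
    have e2 : t ^ (-(1:ℝ)/2) * t⁻¹ = t ^ (-(3:ℝ)/2) := by
      rw [← Real.rpow_neg_one t, ← Real.rpow_add ht0]; norm_num
    have e2' : t ^ (-(1:ℝ)/2) = t ^ (-(3:ℝ)/2) * t := by
      rw [show t ^ (-(3:ℝ)/2) * t = t ^ (-(3:ℝ)/2) * t ^ (1:ℝ) by rw [Real.rpow_one],
        ← Real.rpow_add ht0]
      norm_num
    simp only [hf, hr, e1, e2']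
    field_simp
    ring
  -- G tends to 0 at top
  have htend : Filter.Tendsto G Filter.atTop (nhds 0) := by
    have t1 : Filter.Tendsto (fun s : ℝ => s ^ (-(1:ℝ)/2)) Filter.atTop (nhds 0) := by
      have h := tendsto_rpow_neg_atTop (show (0:ℝ) < 1/2 by norm_num)
      have he : (fun s : ℝ => s ^ (-(1:ℝ)/2)) = fun s : ℝ => s ^ (-(1/2:ℝ)) := by
        funext s; norm_num
      rw [he]; exact h
    have t2 : Filter.Tendsto (fun s : ℝ => 1 / Real.log s - 1 / (Real.log s)^2)
        Filter.atTop (nhds 0) := by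
      have hl : Filter.Tendsto (fun s : ℝ => Real.log s) Filter.atTop Filter.atTop :=
        Real.tendsto_log_atTop
      have a1 : Filter.Tendsto (fun s : ℝ => 1 / Real.log s) Filter.atTop (nhds 0) :=
        (tendsto_inv_atTop_zero.comp hl).congr (fun s => (one_div _).symm)
      have a2 : Filter.Tendsto (fun s : ℝ => 1 / (Real.log s)^2) Filter.atTop (nhds 0) := by
        have h := a1.mul a1
        rw [mul_zero] at h
        refine h.congr fun s => ?_
        rw [div_mul_div_comm, one_mul, sq]
      simpa using a1.sub a2
    have h := (t1.const_mul (-2)).mul t2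
    rw [show ((-2:ℝ) * 0 * 0) = 0 by ring] at h
    exact h
  -- integrability
  have hmono : IntegrableOn (fun t : ℝ => t ^ (-(3:ℝ)/2)) (Set.Ioi x) :=
    integrableOn_Ioi_rpow_of_lt (by norm_num) hx0
  have hmeas : ∀ t ∈ Set.Ioi x, (1:ℝ) < t := fun t ht => lt_trans hx ht
  have hcontf : ContinuousOn f (Set.Ioi x) := by
    apply ContinuousOn.mul
    · exact fun t ht => (Real.continuousAt_rpow_const t _ (Or.inl (ne_of_gt (lt_trans one_pos (hmeas t ht))))).continuousWithinAt
    · apply ContinuousOn.add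
      · exact fun t ht => ((continuousAt_const.div (Real.continuousAt_log (ne_of_gt (lt_trans one_pos (hmeas t ht)))) (ne_of_gt (Real.log_pos (hmeas t ht))))).continuousWithinAt
      · exact fun t ht => ((continuousAt_const.div ((Real.continuousAt_log (ne_of_gt (lt_trans one_pos (hmeas t ht)))).pow 2) (ne_of_gt (pow_pos (Real.log_pos (hmeas t ht)) 2)))).continuousWithinAt
  have hcontr : ContinuousOn r (Set.Ioi x) := by
    apply ContinuousOn.mul continuousOn_const
    exact fun t ht => ((Real.continuousAt_rpow_const t _ (Or.inl (ne_of_gt (lt_trans one_pos (hmeas t ht))))).div ((Real.continuousAt_log (ne_of_gt (lt_trans one_pos (hmeas t ht)))).pow 3) (ne_of_gt (pow_pos (Real.log_pos (hmeas t ht)) 3))).continuousWithinAt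
  have hintf : IntegrableOn f (Set.Ioi x) := by
    apply MeasureTheory.Integrable.mono' ((hmono.const_mul (1 / Real.log x + 1 / (Real.log x)^2)))
      (hcontf.aestronglyMeasurable measurableSet_Ioi)
    filter_upwards [ae_restrict_mem measurableSet_Ioi] with t ht
    have ht1 := hmeas t ht
    have hlt := Real.log_pos ht1
    have hlxt : Real.log x ≤ Real.log t := Real.log_le_log hx0 (le_of_lt ht)
    have h1 : 1 / Real.log t ≤ 1 / Real.log x := by
      apply one_div_le_one_div_of_le hlx hlxt
    have h2 : 1 / (Real.log t)^2 ≤ 1 / (Real.log x)^2 := by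
      apply one_div_le_one_div_of_le (by positivity)
      exact pow_le_pow_left₀ (le_of_lt hlx) hlxt 2
    have hpos : (0:ℝ) ≤ t ^ (-(3:ℝ)/2) := Real.rpow_nonneg (by linarith) _
    rw [Real.norm_eq_abs, abs_of_nonneg (by positivity)]
    calc t ^ (-(3:ℝ)/2) * (1 / Real.log t + 1 / (Real.log t)^2)
        ≤ t ^ (-(3:ℝ)/2) * (1 / Real.log x + 1 / (Real.log x)^2) := by
          apply mul_le_mul_of_nonneg_left (by linarith) hpos
      _ = (1 / Real.log x + 1 / (Real.log x)^2) * t ^ (-(3:ℝ)/2) := by ring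
  have hintr : IntegrableOn r (Set.Ioi x) := by
    apply MeasureTheory.Integrable.mono' ((hmono.const_mul (4 / (Real.log x)^3)))
      (hcontr.aestronglyMeasurable measurableSet_Ioi)
    filter_upwards [ae_restrict_mem measurableSet_Ioi] with t ht
    have ht1 := hmeas t ht
    have hlt := Real.log_pos ht1
    have hlxt : Real.log x ≤ Real.log t := Real.log_le_log hx0 (le_of_lt ht)
    have hpos : (0:ℝ) ≤ t ^ (-(3:ℝ)/2) := Real.rpow_nonneg (by linarith) _
    rw [Real.norm_eq_abs, abs_of_nonneg (by positivity)]
    have h3 : 1 / (Real.log t)^3 ≤ 1 / (Real.log x)^3 := by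
      apply one_div_le_one_div_of_le (by positivity)
      exact pow_le_pow_left₀ (le_of_lt hlx) hlxt 3
    calc 4 * (t ^ (-(3:ℝ)/2) / (Real.log t)^3)
        = (4 * (1 / (Real.log t)^3)) * t ^ (-(3:ℝ)/2) := by ring
      _ ≤ (4 * (1 / (Real.log x)^3)) * t ^ (-(3:ℝ)/2) := by
          apply mul_le_mul_of_nonneg_right (by linarith) hpos
      _ = 4 / (Real.log x)^3 * t ^ (-(3:ℝ)/2) := by ring
  have hintfr : IntegrableOn (fun t => f t - r t) (Set.Ioi x) := hintf.sub hintr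
  -- main FTC equation
  have hFTC : (∫ t in Set.Ioi x, (f t - r t)) = 0 - G x :=
    MeasureTheory.integral_Ioi_of_hasDerivAt_of_tendsto' hderiv hintfr htend
  have hsplit : (∫ t in Set.Ioi x, f t) = (0 - G x) + ∫ t in Set.Ioi x, r t := by
    rw [← hFTC, ← MeasureTheory.integral_add hintfr hintr]
    congr 1; funext t; ring
  -- value of -G x
  have hsqrt : Real.sqrt x = x ^ ((1:ℝ)/2) := Real.sqrt_eq_rpow x
  have hGx : 0 - G x = 2 / (Real.sqrt x * Real.log x) - 2 / (Real.sqrt x * (Real.log x)^2) := by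
    have hx2 : x ^ (-(1:ℝ)/2) = 1 / Real.sqrt x := by
      rw [hsqrt, eq_div_iff (by positivity), ← Real.rpow_add hx0]
      norm_num
    have hsx : (0:ℝ) < Real.sqrt x := Real.sqrt_pos.mpr hx0
    simp only [hG, hx2]
    field_simp
    ring
  -- bounds on ∫ r
  have hrint_nonneg : 0 ≤ ∫ t in Set.Ioi x, r t := by
    apply MeasureTheory.setIntegral_nonneg measurableSet_Ioi
    intro t ht
    have ht1 := hmeas t ht
    have := Real.log_pos ht1
    have : (0:ℝ) ≤ t ^ (-(3:ℝ)/2) := Real.rpow_nonneg (by linarith) _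
    positivity
  have hrint_le : (∫ t in Set.Ioi x, r t) ≤ 8 / (Real.sqrt x * (Real.log x)^3) := by
    have h1 : (∫ t in Set.Ioi x, r t) ≤ ∫ t in Set.Ioi x, (4 / (Real.log x)^3) * t ^ (-(3:ℝ)/2) := by
      apply MeasureTheory.setIntegral_mono_on hintr (hmono.const_mul _) measurableSet_Ioi
      intro t ht
      have ht1 := hmeas t ht
      have hlt := Real.log_pos ht1
      have hlxt : Real.log x ≤ Real.log t := Real.log_le_log hx0 (le_of_lt ht)
      have hpos : (0:ℝ) ≤ t ^ (-(3:ℝ)/2) := Real.rpow_nonneg (by linarith) _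
      have h3 : 1 / (Real.log t)^3 ≤ 1 / (Real.log x)^3 := by
        apply one_div_le_one_div_of_le (by positivity)
        exact pow_le_pow_left₀ (le_of_lt hlx) hlxt 3
      calc 4 * (t ^ (-(3:ℝ)/2) / (Real.log t)^3)
          = (4 * (1 / (Real.log t)^3)) * t ^ (-(3:ℝ)/2) := by ring
        _ ≤ (4 * (1 / (Real.log x)^3)) * t ^ (-(3:ℝ)/2) := by
            apply mul_le_mul_of_nonneg_right (by linarith) hpos
        _ = (4 / (Real.log x)^3) * t ^ (-(3:ℝ)/2) := by ring
    have h2 : (∫ t in Set.Ioi x, (4 / (Real.log x)^3) * t ^ (-(3:ℝ)/2))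
        = 8 / (Real.sqrt x * (Real.log x)^3) := by
      rw [MeasureTheory.integral_const_mul, integral_Ioi_rpow_of_lt (by norm_num) hx0]
      have hx2 : x ^ ((-(3:ℝ)/2) + 1) = 1 / Real.sqrt x := by
        rw [hsqrt, eq_div_iff (by positivity), ← Real.rpow_add hx0]
        norm_num
      rw [hx2]
      have hsx : (0:ℝ) < Real.sqrt x := Real.sqrt_pos.mpr hx0
      field_simp
      ring
    linarith
  constructor
  · rw [show (∫ t in Set.Ioi x, t ^ (-(3:ℝ)/2) * (1 / Real.log t + 1 / (Real.log t)^2)) = ∫ t in Set.Ioi x, f t from rfl, hsplit, hGx]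
    linarith
  · rw [show (∫ t in Set.Ioi x, t ^ (-(3:ℝ)/2) * (1 / Real.log t + 1 / (Real.log t)^2)) = ∫ t in Set.Ioi x, f t from rfl, hsplit, hGx]
    linarith
end

section
/- Let κ(x) = ⌊log x / log 2⌋ and H(x) = 1 + Σ_{k=4}^{κ(x)} x^{1/k - 1/3} for x ≥ 16. Then for every integer j ≥ 9 and every real x ≥ 2^j, H(x) ≤ H(2^j). -/
/-- `κ(x) = ⌊log x / log 2⌋`, the largest integer `k` with `x^(1/k) ≥ 2`. -/
noncomputable def kappa (x : ℝ) : ℕ := ⌊Real.log x / Real.log 2⌋₊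

/-- `H(x) = 1 + ∑_{k=4}^{κ(x)} x^(1/k - 1/3)`. -/
noncomputable def H (x : ℝ) : ℝ := 1 + ∑ k ∈ Finset.Icc 4 (kappa x), x ^ ((1 : ℝ) / k - 1 / 3)

/-!
The exponents `1/k - 1/3` are nonpositive for `k ≥ 4`, so `H` decreases on each interval
`[2^n, 2^(n+1))` and it suffices to compare `H` at consecutive powers of two. Passing from `2^m`
to `2^(m+1)` adds the term `2^(2/3) / 2^(m/3)` for `k = m + 1`, but multiplies each earlier term
`2^(m (1/k - 1/3))` by `2^(1/k - 1/3) < 1`. For `m ≥ 9` the losses of the terms `k = 4, …, 9`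
alone outweigh the new term; after multiplying by `2^(m/3)` this is the numerical inequality
`2^(2/3) ≤ ∑_{k=4}^{9} 2^(9/k) (1 - 2^(1/k - 1/3))`, i.e. `1.587… ≤ 1.763…`.
-/

open Real Finset

lemma le_kappa_iff {x : ℝ} (hx : 1 ≤ x) {j : ℕ} : j ≤ kappa x ↔ (2 : ℝ) ^ j ≤ x := by
  rw [kappa, ← logb, Nat.le_floor_iff (logb_nonneg one_lt_two hx),
    le_logb_iff_rpow_le one_lt_two (by positivity), rpow_natCast]

lemma kappa_two_pow (n : ℕ) : kappa (2 ^ n) = n := by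
  rw [kappa, ← logb, logb_pow, logb_self_eq_one one_lt_two, mul_one, Nat.floor_natCast]

lemma one_div_sub_one_third_nonpos {k : ℕ} (hk : 3 ≤ k) : (1 : ℝ) / k - 1 / 3 ≤ 0 := by
  have : (3 : ℝ) ≤ k := by exact_mod_cast hk
  rw [sub_nonpos]
  gcongr

lemma H_le_H_two_pow_kappa {x : ℝ} (hx : 1 ≤ x) : H x ≤ H (2 ^ kappa x) := by
  rw [H, H, kappa_two_pow]
  refine add_le_add_right (sum_le_sum fun k hk => ?_) 1
  exact rpow_le_rpow_of_nonpos (by positivity) ((le_kappa_iff hx).1 le_rfl)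
    (one_div_sub_one_third_nonpos ((mem_Icc.1 hk).1.trans' (by norm_num)))

lemma rpow_div_natCast_pow {b : ℝ} (hb : 0 ≤ b) (p : ℕ) {q : ℕ} (hq : q ≠ 0) :
    (b ^ ((p : ℝ) / q)) ^ q = b ^ p := by
  rw [← rpow_natCast, ← rpow_mul hb, div_mul_cancel₀ _ (Nat.cast_ne_zero.2 hq), rpow_natCast]

lemma pow_le_pow_iff_le_rpow_div {a b : ℝ} (ha : 0 ≤ a) (hb : 0 ≤ b) {p q : ℕ}
    (hq : q ≠ 0) :
    a ^ q ≤ b ^ p ↔ a ≤ b ^ ((p : ℝ) / q) := by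
  rw [← rpow_div_natCast_pow hb p hq, pow_le_pow_iff_left₀ ha (by positivity) hq]

lemma pow_le_pow_iff_rpow_div_le {a b : ℝ} (ha : 0 ≤ a) (hb : 0 ≤ b) {p q : ℕ}
    (hq : q ≠ 0) :
    b ^ p ≤ a ^ q ↔ b ^ ((p : ℝ) / q) ≤ a := by
  rw [← rpow_div_natCast_pow hb p hq, pow_le_pow_iff_left₀ (by positivity) ha hq]

lemma two_rpow_two_thirds_le_sum :
    (2 : ℝ) ^ ((2 : ℝ) / 3) ≤
      ∑ k ∈ Icc (4 : ℕ) 9, (2 : ℝ) ^ ((9 : ℝ) / k) * (1 - 2 ^ ((1 : ℝ) / k - 1 / 3)) := by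
  have lower (p q : ℕ) (a : ℝ) (ha : 0 ≤ a := by norm_num) (hq : q ≠ 0 := by norm_num)
      (h : a ^ q ≤ 2 ^ p := by norm_num) : a ≤ (2 : ℝ) ^ ((p : ℝ) / q) :=
    (pow_le_pow_iff_le_rpow_div ha zero_le_two hq).1 h
  have upper (p q : ℕ) (a : ℝ) (ha : 0 ≤ a := by norm_num) (hq : q ≠ 0 := by norm_num)
      (h : 2 ^ p ≤ a ^ q := by norm_num) : (2 : ℝ) ^ ((p : ℝ) / q) ≤ a :=
    (pow_le_pow_iff_rpow_div_le ha zero_le_two hq).1 h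
  simp only [mul_one_sub, ← rpow_add two_pos]
  norm_num [sum_Icc_succ_top]
  have := upper 2 3 1.59
  have := lower 9 4 4.75
  have := upper 13 6 4.5
  have := lower 9 5 3.48
  have := upper 5 3 3.18
  have := lower 3 2 2.82
  have := upper 4 3 2.52
  have := lower 9 7 2.43
  have := upper 23 21 2.14
  have := lower 9 8 2.18
  have := upper 11 12 1.89
  have := upper 7 9 1.72
  norm_num at *
  linarith

lemma two_rpow_two_thirds_le_sum_rpow {y : ℝ} (hy : 2 ^ 9 ≤ y) :
    (2 : ℝ) ^ ((2 : ℝ) / 3) ≤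
      ∑ k ∈ Icc (4 : ℕ) 9, y ^ ((1 : ℝ) / k) * (1 - 2 ^ ((1 : ℝ) / k - 1 / 3)) := by
  refine two_rpow_two_thirds_le_sum.trans (sum_le_sum fun k hk => ?_)
  have hk : 3 ≤ k := (mem_Icc.1 hk).1.trans' (by norm_num)
  gcongr
  · exact sub_nonneg.2 <|
      rpow_le_one_of_one_le_of_nonpos one_le_two (one_div_sub_one_third_nonpos hk)
  · rw [← mul_one_div, ← Nat.cast_ofNat (R := ℝ) (n := 9), rpow_natCast_mul zero_le_two]
    gcongr

lemma rpow_sub_sub_mul_rpow_eq {y c : ℝ} (hy : 0 < y) (hc : 0 ≤ c) (a b : ℝ) :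
    y ^ (a - b) - (c * y) ^ (a - b) = y ^ a * (1 - c ^ (a - b)) / y ^ b := by
  rw [mul_rpow hc hy.le, rpow_sub hy]
  ring

lemma two_pow_succ_rpow_one_div_sub_one_third (m : ℕ) :
    ((2 : ℝ) ^ (m + 1)) ^ ((1 : ℝ) / (m + 1 : ℕ) - 1 / 3) =
      2 ^ ((2 : ℝ) / 3) / ((2 : ℝ) ^ m) ^ ((1 : ℝ) / 3) := by
  have htwo : (2 : ℝ) ^ ((2 : ℝ) / 3) * 2 ^ ((1 : ℝ) / 3) = 2 := by
    rw [← rpow_add two_pos]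
    norm_num
  rw [rpow_sub (by positivity), one_div, pow_rpow_inv_natCast zero_le_two m.succ_ne_zero,
    pow_succ', mul_rpow zero_le_two (by positivity), ← div_div]
  congr 1
  rw [div_eq_iff (by positivity), htwo]

lemma H_two_pow_succ_le {m : ℕ} (hm : 9 ≤ m) : H (2 ^ (m + 1)) ≤ H (2 ^ m) := by
  rw [H, H, kappa_two_pow, kappa_two_pow, sum_Icc_succ_top (by omega : 4 ≤ m + 1),
    two_pow_succ_rpow_one_div_sub_one_third, pow_succ']
  set y : ℝ := 2 ^ m with hy_def
  have hy : 0 < y := by positivity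
  have loss : 2 ^ ((2 : ℝ) / 3) / y ^ ((1 : ℝ) / 3) ≤
      ∑ k ∈ Icc 4 m, (y ^ ((1 : ℝ) / k - 1 / 3) - (2 * y) ^ ((1 : ℝ) / k - 1 / 3)) := by
    calc 2 ^ ((2 : ℝ) / 3) / y ^ ((1 : ℝ) / 3)
        ≤ (∑ k ∈ Icc (4 : ℕ) 9, y ^ ((1 : ℝ) / k) * (1 - 2 ^ ((1 : ℝ) / k - 1 / 3))) /
            y ^ ((1 : ℝ) / 3) := by
          gcongr
          exact two_rpow_two_thirds_le_sum_rpow (by rw [hy_def]; gcongr; norm_num)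
      _ = ∑ k ∈ Icc (4 : ℕ) 9,
            (y ^ ((1 : ℝ) / k - 1 / 3) - (2 * y) ^ ((1 : ℝ) / k - 1 / 3)) := by
          rw [sum_div]
          exact sum_congr rfl fun k _ => (rpow_sub_sub_mul_rpow_eq hy zero_le_two _ _).symm
      _ ≤ _ := by
          refine sum_le_sum_of_subset_of_nonneg (Icc_subset_Icc le_rfl hm) fun k hk _ => ?_
          exact sub_nonneg.2 (rpow_le_rpow_of_nonpos hy (by linarith)
            (one_div_sub_one_third_nonpos ((mem_Icc.1 hk).1.trans' (by norm_num))))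
  rw [sum_sub_distrib] at loss
  linarith

theorem H_le (j : ℕ) (hj : 9 ≤ j) (x : ℝ) (hx : (2 : ℝ) ^ j ≤ x) : H x ≤ H ((2 : ℝ) ^ j) := by
  have hx1 : 1 ≤ x := (one_le_pow₀ one_le_two).trans hx
  have hjk : j ≤ kappa x := (le_kappa_iff hx1).2 hx
  calc H x ≤ H (2 ^ kappa x) := H_le_H_two_pow_kappa hx1
    _ ≤ H (2 ^ j) :=
      antitoneOn_nat_Ici_of_succ_le (f := fun n => H (2 ^ n))
        (fun n hn => H_two_pow_succ_le (hj.trans hn)) (le_refl j) hjk hjk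
end

section
/- Let n ≥ 2 have exactly j distinct prime factors, and let k ≥ j. Then n/φ(n) ≤ N_k/φ(N_k), where N_k is the product of the first k primes and φ is Euler's totient function. -/
/-- `N k`, the `k`-th primorial: product of the first `k` primes. -/
noncomputable def primorial' (k : ℕ) : ℕ := ∏ i ∈ Finset.range k, Nat.nth Nat.Prime i

/-!
By Euler's product formula `n / φ n = ∏_{p ∣ n} p / (p - 1)`, a product of factors `≥ 1` which
decrease in `p`. If the prime factors of `n` are listed increasingly, the `i`-th one is at least
`p_i`, so the product is at most the one over `p_1, …, p_j`, hence at most the one over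
`p_1, …, p_k`, which is `N_k / φ N_k`.
-/

open Finset

theorem Nat.cast_div_totient_eq_prod {K : Type*} [Field K] [CharZero K] {n : ℕ} (hn : n ≠ 0) :
    (n : K) / n.totient = ∏ p ∈ n.primeFactors, (p : K) / (p - 1) := by
  have hprime : ∀ p ∈ n.primeFactors, p.Prime := fun p hp => Nat.prime_of_mem_primeFactors hp
  have hsub : ∀ p ∈ n.primeFactors, ((p - 1 : ℕ) : K) = p - 1 := fun p hp =>
    Nat.cast_pred (hprime p hp).pos
  have hprod : (n.totient : K) * ∏ p ∈ n.primeFactors, (p : K)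
      = n * ∏ p ∈ n.primeFactors, ((p : K) - 1) := by
    rw [← prod_congr rfl hsub, ← Nat.cast_prod, ← Nat.cast_prod, ← Nat.cast_mul, ← Nat.cast_mul,
      n.totient_mul_prod_primeFactors]
  have htot : (n.totient : K) ≠ 0 := by exact_mod_cast (Nat.totient_pos.mpr hn.bot_lt).ne'
  have hden : ∏ p ∈ n.primeFactors, ((p : K) - 1) ≠ 0 := prod_ne_zero_iff.mpr fun p hp => by
    rw [← hsub p hp]
    exact_mod_cast (Nat.sub_pos_of_lt (hprime p hp).one_lt).ne'
  rw [prod_div_distrib, div_eq_div_iff htot hden, ← hprod, mul_comm]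

section DivSubOne

variable {K : Type*} [Field K] [LinearOrder K] [IsStrictOrderedRing K]

theorem one_le_div_sub_one {a : K} (ha : 1 < a) : 1 ≤ a / (a - 1) := by
  rw [le_div_iff₀ (by linarith)]
  linarith

theorem div_sub_one_le_div_sub_one {a b : K} (ha : 1 < a) (hab : a ≤ b) :
    b / (b - 1) ≤ a / (a - 1) := by
  rw [div_le_div_iff₀ (by linarith) (by linarith)]
  linarith

end DivSubOne

namespace Nat

variable {P : ℕ → Prop} [DecidablePred P]

theorem card_le_count_of_forall_lt {s : Finset ℕ} (hs : ∀ x ∈ s, P x) {a : ℕ}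
    (hlt : ∀ x ∈ s, x < a) : #s ≤ count P a := by
  rw [count_eq_card_filter_range]
  exact card_le_card fun x hx => mem_filter.mpr ⟨mem_range.mpr (hlt x hx), hs x hx⟩

theorem prod_le_prod_range_nth {R : Type*} [CommSemiring R] [PartialOrder R] [IsOrderedRing R]
    {g : ℕ → R} (hP : (Set.ofPred P).Infinite) (hg0 : ∀ x, P x → 0 ≤ g x)
    (hg : ∀ x y, P x → x ≤ y → g y ≤ g x) (s : Finset ℕ) (hs : ∀ x ∈ s, P x) :
    ∏ x ∈ s, g x ≤ ∏ i ∈ range #s, g (nth P i) := by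
  induction s using Finset.induction_on_max with
  | empty => simp
  | insert a t hlt ih =>
    have ha : P a := hs a (mem_insert_self a t)
    have ht : ∀ x ∈ t, P x := fun x hx => hs x (mem_insert_of_mem hx)
    have hnth : nth P #t ≤ a := by
      calc nth P #t ≤ nth P (count P a) :=
            nth_monotone hP (card_le_count_of_forall_lt ht hlt)
        _ = a := nth_count ha
    rw [prod_insert fun h => (hlt a h).false, card_insert_of_notMem fun h => (hlt a h).false,
      prod_range_succ, mul_comm]
    exact mul_le_mul (ih ht) (hg _ _ (nth_mem_of_infinite hP _) hnth) (hg0 a ha)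
      (prod_nonneg fun i _ => hg0 _ (nth_mem_of_infinite hP i))

end Nat

theorem primeFactors_primorial' (k : ℕ) :
    (primorial' k).primeFactors = (range k).image (Nat.nth Nat.Prime) := by
  have h := Nat.primeFactors_prod (s := (range k).image (Nat.nth Nat.Prime)) fun p hp => by
    obtain ⟨i, -, rfl⟩ := mem_image.mp hp
    exact Nat.prime_nth_prime i
  rwa [prod_image fun i _ j _ h => Nat.nth_injective Nat.infinite_setOfPred_prime h] at h

theorem div_totient_le_primorial (n k : ℕ) (hn : 2 ≤ n) (hk : n.primeFactors.card ≤ k) :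
    (n : ℝ) / (Nat.totient n : ℝ) ≤ (primorial' k : ℝ) / (Nat.totient (primorial' k) : ℝ) := by
  set g : ℕ → ℝ := fun p => (p : ℝ) / (p - 1)
  have hcast : ∀ p : ℕ, p.Prime → (1 : ℝ) < p := fun p hp => by exact_mod_cast hp.one_lt
  have hg1 : ∀ p : ℕ, p.Prime → 1 ≤ g p := fun p hp => one_le_div_sub_one (hcast p hp)
  have hg : ∀ p q : ℕ, p.Prime → p ≤ q → g q ≤ g p := fun p q hp hpq =>
    div_sub_one_le_div_sub_one (hcast p hp) (by exact_mod_cast hpq)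
  have hprimorial : primorial' k ≠ 0 :=
    prod_ne_zero_iff.mpr fun i _ => (Nat.prime_nth_prime i).ne_zero
  rw [Nat.cast_div_totient_eq_prod (by omega), Nat.cast_div_totient_eq_prod hprimorial,
    primeFactors_primorial',
    prod_image fun i _ j _ h => Nat.nth_injective Nat.infinite_setOfPred_prime h]
  calc ∏ p ∈ n.primeFactors, g p
      ≤ ∏ i ∈ range #n.primeFactors, g (Nat.nth Nat.Prime i) :=
        Nat.prod_le_prod_range_nth Nat.infinite_setOfPred_prime
          (fun p hp => zero_le_one.trans (hg1 p hp)) hg _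
          fun p hp => Nat.prime_of_mem_primeFactors hp
    _ ≤ ∏ i ∈ range k, g (Nat.nth Nat.Prime i) :=
        prod_le_prod_of_subset_of_one_le (range_subset_range.mpr hk)
          (fun i _ => zero_le_one.trans (hg1 _ (Nat.prime_nth_prime i)))
          fun i _ _ => hg1 _ (Nat.prime_nth_prime i)
end
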